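/- Let Γ = (γ_{ij}) be an (m+1)×m matrix with entries in [0,1] that is monotone and satisfies γ_{0j} < γ_{mj} for every j = 1, …, m. Let s and ŝ be integers with 1 ≤ s < ŝ. Let u^{(0)} = û^{(0)} be a vector all of whose components lie in the open interval (0,1), and define the sequences u^{(t)} and û^{(t)} by u^{(t+1)}_j = γ_{mj} − Σ_{i=1}^m (γ_{ij} − γ_{i−1,j})(1 − u^{(t)}_i)^s and û^{(t+1)}_j = γ_{mj} − Σ_{i=1}^m (γ_{ij} − γ_{i−1,j})(1 − û^{(t)}_i)^{ŝ} for j = 1, …, m and t ≥ 0. Then for every t ≥ 1 and every j = 1, …, m, one has 0 < u^{(t)}_j < û^{(t)}_j < 1. -/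

import Mathlib

/-!
Fix a column `j` and write `w i = γ i j - γ (i-1) j ≥ 0`; these weights telescope to
`γ m j - γ 0 j > 0`. One update step sends `x` to `γ m j - ∑ w i (1 - x i)^s`. If all `x i`
lie in `(0,1)` then so do all `(1 - x i)^s` (as `s ≥ 1`), so the weighted sum lies strictly
between `0` and `γ m j - γ 0 j`, and the update lies strictly between `γ 0 j ≥ 0` and
`γ m j ≤ 1`. If moreover `x ≤ y` componentwise, then `(1 - y i)^ŝ < (1 - y i)^s ≤ (1 - x i)^s`
for every `i`, so the update with `ŝ` at `y` strictly exceeds the update with `s` at `x`.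
Induction on `t` with the invariant `u ≤ v`, both in `(0,1)`, concludes.
-/

open Finset

theorem sum_Icc_sub_pred {M : Type*} [AddCommGroup M] (f : ℕ → M) (n : ℕ) :
    ∑ i ∈ Icc 1 n, (f i - f (i - 1)) = f n - f 0 := by
  induction n with
  | zero => simp
  | succ n ih =>
    rw [sum_Icc_succ_top (by omega), ih, Nat.add_sub_cancel]
    abel

theorem sum_mul_lt_sum_mul_of_lt {ι R : Type*} [CommRing R] [LinearOrder R]
    [IsStrictOrderedRing R] {S : Finset ι} {w f g : ι → R} (hw : ∀ i ∈ S, 0 ≤ w i)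
    (hpos : 0 < ∑ i ∈ S, w i) (hfg : ∀ i ∈ S, f i < g i) :
    ∑ i ∈ S, w i * f i < ∑ i ∈ S, w i * g i := by
  obtain ⟨i₀, hi₀, hwi₀⟩ : ∃ i ∈ S, 0 < w i :=
    exists_lt_of_sum_lt (f := fun _ ↦ (0 : R)) (by simpa using hpos)
  exact sum_lt_sum (fun i hi ↦ mul_le_mul_of_nonneg_left (hfg i hi).le (hw i hi))
    ⟨i₀, hi₀, mul_lt_mul_of_pos_left (hfg i₀ hi₀) hwi₀⟩

theorem pow_lt_pow_of_le_of_lt_one {R : Type*} [CommRing R] [LinearOrder R]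
    [IsStrictOrderedRing R] {a b : R} {s s' : ℕ} (ha₀ : 0 < a) (ha₁ : a < 1) (hab : a ≤ b)
    (hss : s < s') : a ^ s' < b ^ s :=
  (pow_lt_pow_right_of_lt_one₀ ha₀ ha₁ hss).trans_le (pow_le_pow_left₀ ha₀.le hab s)

/-- One step of the recursion on the column `c = γ · j` of the transition matrix. -/
def columnStep (c : ℕ → ℝ) (m s : ℕ) (x : ℕ → ℝ) : ℝ :=
  c m - ∑ i ∈ Icc 1 m, (c i - c (i - 1)) * (1 - x i) ^ s

section columnStep

variable {c : ℕ → ℝ} {m : ℕ}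

theorem columnStep_mem_Ioo (hmono : ∀ i ∈ Icc 1 m, c (i - 1) ≤ c i) (hc₀ : 0 ≤ c 0)
    (hgap : c 0 < c m) (hcm : c m ≤ 1) {s : ℕ} (hs : 1 ≤ s) {x : ℕ → ℝ}
    (hx : ∀ i ∈ Icc 1 m, x i ∈ Set.Ioo 0 1) : columnStep c m s x ∈ Set.Ioo 0 1 := by
  have hw : ∀ i ∈ Icc 1 m, 0 ≤ c i - c (i - 1) := fun i hi ↦ sub_nonneg.2 (hmono i hi)
  have hwsum : 0 < ∑ i ∈ Icc 1 m, (c i - c (i - 1)) := by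
    rw [sum_Icc_sub_pred]
    linarith
  have hpow : ∀ i ∈ Icc 1 m, (1 - x i) ^ s ∈ Set.Ioo 0 1 := fun i hi ↦ by
    obtain ⟨hx₀, hx₁⟩ := hx i hi
    exact ⟨pow_pos (by linarith) s, pow_lt_one₀ (by linarith) (by linarith) (by omega)⟩
  have hlower := sum_mul_lt_sum_mul_of_lt hw hwsum fun i hi ↦ (hpow i hi).1
  have hupper := sum_mul_lt_sum_mul_of_lt hw hwsum fun i hi ↦ (hpow i hi).2
  simp only [mul_zero, mul_one, sum_const_zero, sum_Icc_sub_pred] at hlower hupper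
  constructor <;> unfold columnStep <;> linarith

theorem columnStep_lt_columnStep (hmono : ∀ i ∈ Icc 1 m, c (i - 1) ≤ c i)
    (hgap : c 0 < c m) {s s' : ℕ} (hss : s < s') {x y : ℕ → ℝ}
    (hxy : ∀ i ∈ Icc 1 m, x i ≤ y i) (hy : ∀ i ∈ Icc 1 m, y i ∈ Set.Ioo 0 1) :
    columnStep c m s x < columnStep c m s' y := by
  have hw : ∀ i ∈ Icc 1 m, 0 ≤ c i - c (i - 1) := fun i hi ↦ sub_nonneg.2 (hmono i hi)
  have hwsum : 0 < ∑ i ∈ Icc 1 m, (c i - c (i - 1)) := by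
    rw [sum_Icc_sub_pred]
    linarith
  have hpow : ∀ i ∈ Icc 1 m, (1 - y i) ^ s' < (1 - x i) ^ s := fun i hi ↦ by
    obtain ⟨hy₀, hy₁⟩ := hy i hi
    exact pow_lt_pow_of_le_of_lt_one (by linarith) (by linarith) (by linarith [hxy i hi]) hss
  have := sum_mul_lt_sum_mul_of_lt hw hwsum hpow
  unfold columnStep
  linarith

theorem columnStep_mem_Ioo_and_lt (hmono : ∀ i ∈ Icc 1 m, c (i - 1) ≤ c i) (hc₀ : 0 ≤ c 0)
    (hgap : c 0 < c m) (hcm : c m ≤ 1) {s s' : ℕ} (hs : 1 ≤ s) (hss : s < s') {x y : ℕ → ℝ}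
    (hxy : ∀ i ∈ Icc 1 m, x i ∈ Set.Ioo 0 1 ∧ x i ≤ y i ∧ y i ∈ Set.Ioo 0 1) :
    columnStep c m s x ∈ Set.Ioo 0 1 ∧ columnStep c m s x < columnStep c m s' y ∧
      columnStep c m s' y ∈ Set.Ioo 0 1 :=
  ⟨columnStep_mem_Ioo hmono hc₀ hgap hcm hs fun i hi ↦ (hxy i hi).1,
    columnStep_lt_columnStep hmono hgap hss (fun i hi ↦ (hxy i hi).2.1) fun i hi ↦ (hxy i hi).2.2,
    columnStep_mem_Ioo hmono hc₀ hgap hcm (hs.trans hss.le) fun i hi ↦ (hxy i hi).2.2⟩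

end columnStep

theorem stmt_8_general (m : ℕ) (γ : ℕ → ℕ → ℝ)
    (hrange : ∀ i j, i ≤ m → 1 ≤ j → j ≤ m → γ i j ∈ Set.Icc (0 : ℝ) 1)
    (hmono : ∀ i j, 1 ≤ i → i ≤ m → 1 ≤ j → j ≤ m → γ (i - 1) j ≤ γ i j)
    (hgap : ∀ j, 1 ≤ j → j ≤ m → γ 0 j < γ m j)
    (s s' : ℕ) (hs : 1 ≤ s) (hss : s < s')
    (u v : ℕ → ℕ → ℝ)
    (h0 : ∀ j, 1 ≤ j → j ≤ m → u 0 j = v 0 j ∧ u 0 j ∈ Set.Ioo (0 : ℝ) 1)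
    (hu : ∀ t, ∀ j, 1 ≤ j → j ≤ m →
      u (t + 1) j = γ m j - ∑ i ∈ Finset.Icc 1 m, (γ i j - γ (i - 1) j) * (1 - u t i) ^ s)
    (hv : ∀ t, ∀ j, 1 ≤ j → j ≤ m →
      v (t + 1) j = γ m j - ∑ i ∈ Finset.Icc 1 m, (γ i j - γ (i - 1) j) * (1 - v t i) ^ s') :
    ∀ t, 1 ≤ t → ∀ j, 1 ≤ j → j ≤ m →
      0 < u t j ∧ u t j < v t j ∧ v t j < 1 := by
  have step : ∀ t, (∀ i ∈ Icc 1 m, u t i ∈ Set.Ioo 0 1 ∧ u t i ≤ v t i ∧ v t i ∈ Set.Ioo 0 1) →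
      ∀ j ∈ Icc 1 m, u (t + 1) j ∈ Set.Ioo 0 1 ∧ u (t + 1) j < v (t + 1) j ∧
        v (t + 1) j ∈ Set.Ioo 0 1 := by
    intro t ih j hj
    obtain ⟨hj₁, hjm⟩ := mem_Icc.1 hj
    rw [hu t j hj₁ hjm, hv t j hj₁ hjm]
    exact columnStep_mem_Ioo_and_lt (c := (γ · j))
      (fun i hi ↦ hmono i j (mem_Icc.1 hi).1 (mem_Icc.1 hi).2 hj₁ hjm)
      (hrange 0 j m.zero_le hj₁ hjm).1 (hgap j hj₁ hjm) (hrange m j le_rfl hj₁ hjm).2 hs hss ih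
  have invariant : ∀ t, ∀ i ∈ Icc 1 m,
      u t i ∈ Set.Ioo 0 1 ∧ u t i ≤ v t i ∧ v t i ∈ Set.Ioo 0 1 := by
    intro t
    induction t with
    | zero =>
      intro i hi
      obtain ⟨heq, hmem⟩ := h0 i (mem_Icc.1 hi).1 (mem_Icc.1 hi).2
      exact ⟨hmem, heq.le, heq ▸ hmem⟩
    | succ t ih => exact fun i hi ↦ (step t ih i hi).imp_right (And.imp_left le_of_lt)
  intro t ht j hj₁ hjm
  obtain ⟨t, rfl⟩ := Nat.exists_eq_add_of_le' ht
  obtain ⟨hut, huv, hvt⟩ := step t (invariant t) j (mem_Icc.2 ⟨hj₁, hjm⟩)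
  exact ⟨hut.1, huv, hvt.2⟩

/-- deterministic core of Theorem 4 of the paper: for a monotone
`(m+1) × m` matrix `γ` with entries in `[0,1]` and `γ 0 j < γ m j` for all `j`, tournament
sizes `1 ≤ s < s'`, and the recursions
`u (t+1) j = γ m j - ∑_{i=1}^m (γ i j - γ (i-1) j)(1 - u t i)^s` (resp. with `s'` and `v`)
started from a common vector with components in `(0,1)`, one has
`0 < u t j < v t j < 1` for every `t ≥ 1` and `j = 1, …, m`. -/
theorem stmt_8 (m : ℕ) (hm : 1 ≤ m) (γ : ℕ → ℕ → ℝ)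
    (hrange : ∀ i j, i ≤ m → 1 ≤ j → j ≤ m → γ i j ∈ Set.Icc (0 : ℝ) 1)
    (hmono : ∀ i j, 1 ≤ i → i ≤ m → 1 ≤ j → j ≤ m → γ (i - 1) j ≤ γ i j)
    (hgap : ∀ j, 1 ≤ j → j ≤ m → γ 0 j < γ m j)
    (s s' : ℕ) (hs : 1 ≤ s) (hss : s < s')
    (u v : ℕ → ℕ → ℝ)
    (h0 : ∀ j, 1 ≤ j → j ≤ m → u 0 j = v 0 j ∧ u 0 j ∈ Set.Ioo (0 : ℝ) 1)
    (hu : ∀ t, ∀ j, 1 ≤ j → j ≤ m →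
      u (t + 1) j = γ m j - ∑ i ∈ Finset.Icc 1 m, (γ i j - γ (i - 1) j) * (1 - u t i) ^ s)
    (hv : ∀ t, ∀ j, 1 ≤ j → j ≤ m →
      v (t + 1) j = γ m j - ∑ i ∈ Finset.Icc 1 m, (γ i j - γ (i - 1) j) * (1 - v t i) ^ s') :
    ∀ t, 1 ≤ t → ∀ j, 1 ≤ j → j ≤ m →
      0 < u t j ∧ u t j < v t j ∧ v t j < 1 :=
  stmt_8_general m γ hrange hmono hgap s s' hs hss u v h0 hu hv
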